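/- Let I ⊂ K[x_1,...,x_n] be a squarefree strongly stable ideal generated in degree d, with generator counts m_{d+j}(I) = |{u ∈ G(I) : m(u) = d+j}| and μ_{d+j}(I) the number of squarefree monomials of degree d+j in I that are minimal generators of I_{[d+j]}. Then the polynomial identity ∑_{j=0}^{n-d} μ_{d+j}(I) t^j = ∑_{j=0}^{n-d} m_{d+j}(I)(1+t)^{n-d-j} holds in ℤ[t]. -/

import Mathlib

/-!
A squarefree monomial is encoded by its support `T ⊆ {1, …, n}`. If `T` has `d + j` elements
and contains a generator, then by strong stability its `d` smallest elements already form a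
generator `g`, and `T = g ∪ S` with `S` any `j`-subset of `(m(g), n]`. Hence
`μ_{d+j}(I) = ∑_{g ∈ G(I)} C(n - m(g), j)`, so the left side is `∑_g (1 + t)^{n - m(g)}`,
which is the right side grouped by the value of `m(g)`.
-/

open Polynomial Finset

def IsSquarefreeStronglyStable (G : Finset (Finset ℕ)) : Prop :=
  ∀ g ∈ G, ∀ i ∈ g, ∀ j, 1 ≤ j → j < i → j ∉ g → insert j (g.erase i) ∈ G

def IsInitialSubset {α : Type*} [LinearOrder α] (s t : Finset α) : Prop :=
  s ⊆ t ∧ ∀ x ∈ s, ∀ y ∈ t \ s, x < y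

theorem IsInitialSubset.eq_of_card_eq {α : Type*} [LinearOrder α] {s₁ s₂ t : Finset α}
    (h₁ : IsInitialSubset s₁ t) (h₂ : IsInitialSubset s₂ t) (hcard : s₁.card = s₂.card) :
    s₁ = s₂ := by
  by_contra hne
  obtain ⟨x, hx₁, hx₂⟩ := not_subset.1 fun h => hne (eq_of_subset_of_card_le h hcard.ge)
  obtain ⟨y, hy₂, hy₁⟩ := not_subset.1 fun h => hne (eq_of_subset_of_card_le h hcard.le).symm
  exact lt_asymm (h₁.2 x hx₁ y (mem_sdiff.2 ⟨h₂.1 hy₂, hy₁⟩))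
    (h₂.2 y hy₂ x (mem_sdiff.2 ⟨h₁.1 hx₁, hx₂⟩))

theorem disjoint_of_forall_sup_lt {g S : Finset ℕ} (hS : ∀ y ∈ S, g.sup id < y) :
    Disjoint g S :=
  disjoint_left.2 fun x hx hxS => (le_sup (f := id) hx).not_gt (hS x hxS)

theorem sup_lt_of_mem_powersetCard_Ioc {g S : Finset ℕ} {j n : ℕ}
    (hS : S ∈ powersetCard j (Ioc (g.sup id) n)) : ∀ y ∈ S, g.sup id < y :=
  fun _ hy => (mem_Ioc.1 ((mem_powersetCard.1 hS).1 hy)).1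

theorem isInitialSubset_union {g S : Finset ℕ} (hS : ∀ y ∈ S, g.sup id < y) :
    IsInitialSubset g (g ∪ S) := by
  refine ⟨subset_union_left, fun x hx y hy => ?_⟩
  obtain ⟨hy, hyg⟩ := mem_sdiff.1 hy
  exact (le_sup (f := id) hx).trans_lt (hS y ((mem_union.1 hy).resolve_left hyg))

theorem IsInitialSubset.sdiff_subset_Ioc {g T : Finset ℕ} {n : ℕ} (h : IsInitialSubset g T)
    (hT : T ⊆ Icc 1 n) : T \ g ⊆ Ioc (g.sup id) n := by
  intro y hy
  have hy' := mem_Icc.1 (hT (mem_sdiff.1 hy).1)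
  exact mem_Ioc.2 ⟨(Finset.sup_lt_iff (by simp; omega)).2 fun x hx => h.2 x hx y hy, hy'.2⟩

/-- Among the members of `G` inside `T`, one with least sum of entries is initial in `T`:
otherwise a stability move would lower that sum. -/
theorem exists_mem_isInitialSubset {G : Finset (Finset ℕ)} (hG : IsSquarefreeStronglyStable G)
    {T g : Finset ℕ} (hT : ∀ y ∈ T, 1 ≤ y) (hg : g ∈ G) (hgT : g ⊆ T) :
    ∃ g' ∈ G, IsInitialSubset g' T := by
  obtain ⟨g', hg', hmin⟩ :=
    exists_min_image (G.filter (· ⊆ T)) (fun s => ∑ x ∈ s, x) ⟨g, mem_filter.2 ⟨hg, hgT⟩⟩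
  obtain ⟨hg'G, hg'T⟩ := mem_filter.1 hg'
  refine ⟨g', hg'G, hg'T, fun x hx y hy => ?_⟩
  obtain ⟨hyT, hyg'⟩ := mem_sdiff.1 hy
  by_contra! hyx
  have hyx : y < x := lt_of_le_of_ne hyx fun h => hyg' (h ▸ hx)
  set g'' := insert y (g'.erase x)
  have hg''T : g'' ⊆ T := insert_subset hyT ((erase_subset x g').trans hg'T)
  have hsum : ∑ z ∈ g'', z + x = ∑ z ∈ g', z + y := by
    rw [sum_insert fun h => hyg' (mem_of_mem_erase h), ← sum_erase_add g' _ hx]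
    ring
  have := hmin g'' (mem_filter.2 ⟨hG g' hg'G x hx y (hT y hyT) hyx hyg', hg''T⟩)
  omega

theorem card_supersets_eq_sum_choose {n d : ℕ} {G : Finset (Finset ℕ)}
    (hsub : ∀ g ∈ G, g ⊆ Icc 1 n) (hcard : ∀ g ∈ G, g.card = d)
    (hG : IsSquarefreeStronglyStable G) (j : ℕ) :
    #{T ∈ (Icc 1 n).powerset | T.card = d + j ∧ ∃ g ∈ G, g ⊆ T}
      = ∑ g ∈ G, (n - g.sup id).choose j := by
  simp_rw [← Nat.card_Ioc, ← card_powersetCard, ← card_sigma]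
  symm
  refine card_bij (fun p _ => p.1 ∪ p.2) (fun ⟨g, S⟩ hgS => ?_) (fun ⟨g₁, S₁⟩ h₁ ⟨g₂, S₂⟩ h₂ h => ?_)
    (fun T hT => ?_)
  · obtain ⟨hg, hS⟩ := mem_sigma.1 hgS
    obtain ⟨hSI, hSc⟩ := mem_powersetCard.1 hS
    refine mem_filter.2 ⟨mem_powerset.2 (union_subset (hsub g hg) fun y hy => ?_), ?_,
      g, hg, subset_union_left⟩
    · have := mem_Ioc.1 (hSI hy)
      exact mem_Icc.2 ⟨by omega, this.2⟩
    · rw [card_union_of_disjoint (disjoint_of_forall_sup_lt (sup_lt_of_mem_powersetCard_Ioc hS)), hcard g hg, hSc]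
  · simp only [mem_sigma] at h₁ h₂ h
    obtain ⟨hg₁, hS₁⟩ := h₁
    obtain ⟨hg₂, hS₂⟩ := h₂
    have hlt₁ := sup_lt_of_mem_powersetCard_Ioc hS₁
    have hlt₂ := sup_lt_of_mem_powersetCard_Ioc hS₂
    have hg : g₁ = g₂ := (isInitialSubset_union hlt₁).eq_of_card_eq
      (h ▸ isInitialSubset_union hlt₂) (by rw [hcard g₁ hg₁, hcard g₂ hg₂])
    subst hg
    have hS : S₁ = S₂ := by
      rw [← union_sdiff_cancel_left (disjoint_of_forall_sup_lt hlt₁),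
        ← union_sdiff_cancel_left (disjoint_of_forall_sup_lt hlt₂)]
      exact congrArg (· \ g₁) h
    rw [hS]
  · obtain ⟨hT, hTc, g, hg, hgT⟩ := mem_filter.1 hT
    have hTI := mem_powerset.1 hT
    obtain ⟨g', hg', hinit⟩ :=
      exists_mem_isInitialSubset hG (fun y hy => (mem_Icc.1 (hTI hy)).1) hg hgT
    refine ⟨⟨g', T \ g'⟩, mem_sigma.2 ⟨hg', mem_powersetCard.2 ⟨hinit.sdiff_subset_Ioc hTI, ?_⟩⟩,
      union_sdiff_of_subset hinit.1⟩
    rw [card_sdiff_of_subset hinit.1, hTc, hcard g' hg']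
    omega

theorem sum_range_C_choose_mul_X_pow {R : Type*} [CommSemiring R] {m N : ℕ} (h : m ≤ N) :
    ∑ j ∈ range (N + 1), C (m.choose j : R) * X ^ j = (1 + X) ^ m := by
  conv_rhs => rw [as_sum_range' ((1 + X : R[X]) ^ m) (N + 1)
    ((natDegree_pow_le_of_le m (by compute_degree)).trans_lt (by simpa using Nat.lt_succ_of_le h))]
  simp only [← C_mul_X_pow_eq_monomial, coeff_one_add_X_pow]

theorem sum_range_card_filter_eq_add_smul {ι M : Type*} [AddCommMonoid M] (s : Finset ι)
    (f : ι → ℕ) (h : ℕ → M) {a b : ℕ} (hf : ∀ x ∈ s, a ≤ f x ∧ f x ≤ b) :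
    ∑ j ∈ range (b - a + 1), #{x ∈ s | f x = a + j} • h (a + j) = ∑ x ∈ s, h (f x) := by
  rw [← sum_fiberwise_of_maps_to (g := fun x => f x - a) (t := range (b - a + 1))
    fun x hx => mem_range.2 (by have := hf x hx; omega)]
  refine sum_congr rfl fun j _ => ?_
  rw [filter_congr fun x hx => show f x - a = j ↔ f x = a + j by have := hf x hx; omega,
    ← sum_const]
  exact sum_congr rfl fun x hx => by rw [(mem_filter.1 hx).2]

theorem card_le_sup_id {g : Finset ℕ} (hg : ∀ x ∈ g, 1 ≤ x) : g.card ≤ g.sup id := by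
  simpa using card_le_card fun x hx => mem_Icc.2 ⟨hg x hx, le_sup (f := id) hx⟩

theorem stmt12_general (n d : ℕ)
    (G : Finset (Finset ℕ))
    (hsub : ∀ g ∈ G, g ⊆ Finset.Icc 1 n)
    (hcard : ∀ g ∈ G, g.card = d)
    (hstable : ∀ g ∈ G, ∀ i ∈ g, ∀ j, 1 ≤ j → j < i → j ∉ g →
      insert j (g.erase i) ∈ G) :
    ∑ j ∈ Finset.range (n - d + 1),
        Polynomial.C ((((Finset.Icc 1 n).powerset.filter
            (fun T => T.card = d + j ∧ ∃ g ∈ G, g ⊆ T)).card : ℤ)) * (X : Polynomial ℤ) ^ j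
      = ∑ j ∈ Finset.range (n - d + 1),
          Polynomial.C (((G.filter (fun g => g.sup id = d + j)).card : ℤ))
            * (1 + (X : Polynomial ℤ)) ^ (n - d - j) := by
  have hbounds : ∀ g ∈ G, d ≤ g.sup id ∧ g.sup id ≤ n := fun g hg =>
    ⟨hcard g hg ▸ card_le_sup_id fun x hx => (mem_Icc.1 (hsub g hg hx)).1,
      Finset.sup_le fun x hx => (mem_Icc.1 (hsub g hg hx)).2⟩
  calc _ = ∑ j ∈ range (n - d + 1), ∑ g ∈ G, C ((n - g.sup id).choose j : ℤ) * X ^ j := by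
        simp only [card_supersets_eq_sum_choose hsub hcard hstable, Nat.cast_sum, map_sum, sum_mul]
    _ = ∑ g ∈ G, (1 + X) ^ (n - g.sup id) := by
        rw [sum_comm]
        exact sum_congr rfl fun g hg => sum_range_C_choose_mul_X_pow (by have := hbounds g hg; omega)
    _ = _ := by
        rw [← sum_range_card_filter_eq_add_smul G (·.sup id) (fun k => (1 + X : ℤ[X]) ^ (n - k))
          hbounds]
        simp only [Nat.sub_sub, nsmul_eq_mul, map_natCast]

/-- The polynomial identity `∑_j μ_{d+j}(I) t^j = ∑_j m_{d+j}(I) (1+t)^{n-d-j}` for a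
squarefree strongly stable ideal generated in degree `d`, in the combinatorial model
of squarefree monomial ideals (see the statement of the generators lemma). -/
theorem stmt12 (n d : ℕ) (hd : 1 ≤ d) (hdn : d ≤ n)
    (G : Finset (Finset ℕ)) (hG : G.Nonempty)
    (hsub : ∀ g ∈ G, g ⊆ Finset.Icc 1 n)
    (hcard : ∀ g ∈ G, g.card = d)
    (hstable : ∀ g ∈ G, ∀ i ∈ g, ∀ j, 1 ≤ j → j < i → j ∉ g →
      insert j (g.erase i) ∈ G) :
    ∑ j ∈ Finset.range (n - d + 1),
        Polynomial.C ((((Finset.Icc 1 n).powerset.filter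
            (fun T => T.card = d + j ∧ ∃ g ∈ G, g ⊆ T)).card : ℤ)) * (X : Polynomial ℤ) ^ j
      = ∑ j ∈ Finset.range (n - d + 1),
          Polynomial.C (((G.filter (fun g => g.sup id = d + j)).card : ℤ))
            * (1 + (X : Polynomial ℤ)) ^ (n - d - j) :=
  stmt12_general n d G hsub hcard hstable
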